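/- If f is L-smooth, μ-PL, and the constant step size h = (1/L)·(1−α)/(1+α)² is used in x^{k+1} = x^k − h∇̃f(x^k) with relative gradient error α ∈ [0,1), then f(x^{k+1}) − f(x^k) ≤ −(1/(2L))·((1−α)²/(1+α)²)‖∇f(x^k)‖², and consequently f(x^N) − f* ≤ (1 − (μ/L)(1−α)²/(1+α)²)^N (f(x^0) − f*). -/

import Mathlib

/-!
Along the inexact step `x - h • t`, the descent lemma of an `L`-smooth function bounds the change
of `f` by `-h ⟪∇f x, t⟫ + (L/2) h² ‖t‖²`. The relative error bound `‖t - ∇f x‖ ≤ α ‖∇f x‖` gives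
`⟪∇f x, t⟫ ≥ (1 - α) ‖∇f x‖²` and `‖t‖ ≤ (1 + α) ‖∇f x‖`, and the step `h = (1-α) / (L (1+α)²)`
minimises the resulting quadratic in `h`. The PL inequality then turns the guaranteed decrease into
a contraction of `f - f*` by the factor `1 - (μ/L) (1-α)² / (1+α)²`.
-/

open Set
open scoped InnerProductSpace

section Descent

variable {E : Type*} [NormedAddCommGroup E] [InnerProductSpace ℝ E] [CompleteSpace E] {f : E → ℝ}

lemma DifferentiableAt.hasDerivAt_comp_add_smul {x v : E} {t : ℝ}
    (hf : DifferentiableAt ℝ f (x + t • v)) :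
    HasDerivAt (fun s : ℝ => f (x + s • v)) ⟪gradient f (x + t • v), v⟫_ℝ t := by
  have hline : HasDerivAt (fun s : ℝ => x + s • v) v t := by
    simpa using ((hasDerivAt_id t).smul_const v).const_add x
  exact (hf.hasGradientAt.hasFDerivAt.comp_hasDerivAt t hline).congr_deriv (by simp)

lemma Differentiable.apply_le_add_inner_gradient_add_sq (hf : Differentiable ℝ f) {L : ℝ} {x : E}
    (hsmooth : ∀ z, ‖gradient f z - gradient f x‖ ≤ L * ‖z - x‖) (y : E) :
    f y ≤ f x + ⟪gradient f x, y - x⟫_ℝ + L / 2 * ‖y - x‖ ^ 2 := by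
  set v := y - x
  set g := gradient f x
  let φ : ℝ → ℝ := fun t => f (x + t • v) - t * ⟪g, v⟫_ℝ - L / 2 * t ^ 2 * ‖v‖ ^ 2
  let φ' : ℝ → ℝ := fun t => ⟪gradient f (x + t • v) - g, v⟫_ℝ - L * t * ‖v‖ ^ 2
  have hφ : ∀ t, HasDerivAt φ (φ' t) t := fun t => by
    have hquad : HasDerivAt (fun t : ℝ => L / 2 * t ^ 2 * ‖v‖ ^ 2) (L * t * ‖v‖ ^ 2) t :=
      (((hasDerivAt_pow 2 t).const_mul (L / 2)).mul_const _).congr_deriv (by ring)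
    refine ((((hf _).hasDerivAt_comp_add_smul).sub
      ((hasDerivAt_id t).mul_const ⟪g, v⟫_ℝ)).sub hquad).congr_deriv ?_
    simp only [φ', inner_sub_left, one_mul]
  have hφ'_nonpos : ∀ t ∈ interior (Ici (0 : ℝ)), φ' t ≤ 0 := by
    intro t ht
    rw [interior_Ici] at ht
    have : ⟪gradient f (x + t • v) - g, v⟫_ℝ ≤ L * t * ‖v‖ ^ 2 :=
      calc ⟪gradient f (x + t • v) - g, v⟫_ℝ
          ≤ ‖gradient f (x + t • v) - g‖ * ‖v‖ := real_inner_le_norm _ _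
        _ ≤ L * ‖(x + t • v) - x‖ * ‖v‖ := by gcongr; exact hsmooth _
        _ = L * t * ‖v‖ ^ 2 := by
          rw [add_sub_cancel_left, norm_smul, Real.norm_of_nonneg (le_of_lt ht)]; ring
    linarith
  have hanti : AntitoneOn φ (Ici 0) :=
    antitoneOn_of_hasDerivWithinAt_nonpos (convex_Ici 0)
      (fun t _ => (hφ t).continuousAt.continuousWithinAt)
      (fun t _ => (hφ t).hasDerivWithinAt) hφ'_nonpos
  have h10 : φ 1 ≤ φ 0 := hanti (mem_Ici.2 le_rfl) (by norm_num : (1 : ℝ) ∈ Ici 0) zero_le_one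
  simp only [φ, one_smul, zero_smul, add_zero, v, add_sub_cancel] at h10
  linarith

end Descent

lemma norm_le_one_add_mul_of_norm_sub_le {E : Type*} [SeminormedAddCommGroup E] {g t : E} {α : ℝ}
    (h : ‖t - g‖ ≤ α * ‖g‖) : ‖t‖ ≤ (1 + α) * ‖g‖ := by
  linarith [norm_sub_norm_le t g]

section InexactGradient

variable {E : Type*} [NormedAddCommGroup E] [InnerProductSpace ℝ E]

lemma one_sub_mul_norm_sq_le_inner_of_norm_sub_le {g t : E} {α : ℝ}
    (h : ‖t - g‖ ≤ α * ‖g‖) : (1 - α) * ‖g‖ ^ 2 ≤ ⟪g, t⟫_ℝ := by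
  have hsplit : ⟪g, t⟫_ℝ = ‖g‖ ^ 2 + ⟪g, t - g⟫_ℝ := by
    rw [inner_sub_right, real_inner_self_eq_norm_sq]; ring
  have herr : -(‖g‖ * ‖t - g‖) ≤ ⟪g, t - g⟫_ℝ := neg_le_of_abs_le (abs_real_inner_le_norm _ _)
  nlinarith [norm_nonneg g]

variable [CompleteSpace E] {f : E → ℝ}

lemma Differentiable.apply_sub_smul_sub_le (hf : Differentiable ℝ f) {L : ℝ} (hL : 0 ≤ L)
    {x : E} (hsmooth : ∀ z, ‖gradient f z - gradient f x‖ ≤ L * ‖z - x‖)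
    {α h : ℝ} (hh : 0 ≤ h) {t : E} (herr : ‖t - gradient f x‖ ≤ α * ‖gradient f x‖) :
    f (x - h • t) - f x ≤ -(h * ((1 - α) - L / 2 * h * (1 + α) ^ 2)) * ‖gradient f x‖ ^ 2 := by
  have hdesc := hf.apply_le_add_inner_gradient_add_sq hsmooth (x - h • t)
  rw [sub_sub_cancel_left, inner_neg_right, real_inner_smul_right, norm_neg, norm_smul,
    Real.norm_of_nonneg hh] at hdesc
  have hinner := one_sub_mul_norm_sq_le_inner_of_norm_sub_le herr
  have hnorm : (h * ‖t‖) ^ 2 ≤ (h * ((1 + α) * ‖gradient f x‖)) ^ 2 := by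
    gcongr; exact norm_le_one_add_mul_of_norm_sub_le herr
  nlinarith [mul_le_mul_of_nonneg_left hnorm hL]

end InexactGradient

lemma sub_le_mul_sub_of_decrease_of_pl {a a' G fstar c μ : ℝ} (hc : 0 ≤ c) (hμ : 0 < μ)
    (hdec : a' - a ≤ -c * G ^ 2) (hPL : a - fstar ≤ 1 / (2 * μ) * G ^ 2) :
    a' - fstar ≤ (1 - 2 * μ * c) * (a - fstar) := by
  have hG : 2 * μ * (a - fstar) ≤ G ^ 2 := by
    rw [one_div_mul_eq_div, le_div_iff₀ (by positivity)] at hPL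
    linarith
  nlinarith [mul_le_mul_of_nonneg_left hG hc]

theorem stmt14_general {n : ℕ} (f : EuclideanSpace ℝ (Fin n) → ℝ)
    (hf : Differentiable ℝ f)
    (L μ : ℝ) (hμ : 0 < μ) (hμL : μ ≤ L)
    (hsmooth : ∀ x y, ‖gradient f y - gradient f x‖ ≤ L * ‖y - x‖)
    (fstar : ℝ)
    (hPL : ∀ y, f y - fstar ≤ (1 / (2 * μ)) * ‖gradient f y‖ ^ 2)
    (α : ℝ) (hα0 : 0 ≤ α) (hα1 : α < 1)
    (x : ℕ → EuclideanSpace ℝ (Fin n))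
    (tg : ℕ → EuclideanSpace ℝ (Fin n))
    (herr : ∀ k, ‖tg k - gradient f (x k)‖ ≤ α * ‖gradient f (x k)‖)
    (hiter : ∀ k, x (k + 1) = x k - ((1 / L) * ((1 - α) / (1 + α) ^ 2)) • tg k) :
    (∀ k, f (x (k + 1)) - f (x k)
      ≤ -(1 / (2 * L)) * ((1 - α) ^ 2 / (1 + α) ^ 2) * ‖gradient f (x k)‖ ^ 2) ∧
    (∀ N : ℕ, f (x N) - fstar
      ≤ (1 - (μ / L) * (1 - α) ^ 2 / (1 + α) ^ 2) ^ N * (f (x 0) - fstar)) := by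
  have hL : 0 < L := hμ.trans_le hμL
  have hα : 0 < 1 + α := by linarith
  have hh : 0 ≤ 1 / L * ((1 - α) / (1 + α) ^ 2) :=
    mul_nonneg (by positivity) (div_nonneg (by linarith) (by positivity))
  have hcoeff : 1 / L * ((1 - α) / (1 + α) ^ 2)
      * ((1 - α) - L / 2 * (1 / L * ((1 - α) / (1 + α) ^ 2)) * (1 + α) ^ 2)
      = 1 / (2 * L) * ((1 - α) ^ 2 / (1 + α) ^ 2) := by
    field_simp; ring
  have hstep : ∀ k, f (x (k + 1)) - f (x k)
      ≤ -(1 / (2 * L)) * ((1 - α) ^ 2 / (1 + α) ^ 2) * ‖gradient f (x k)‖ ^ 2 := fun k => by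
    rw [hiter k, neg_mul, ← hcoeff]
    exact hf.apply_sub_smul_sub_le hL.le (hsmooth _) hh (herr k)
  refine ⟨hstep, fun N => le_geom (u := fun k => f (x k) - fstar) ?_ N fun k _ => ?_⟩
  · have hsq : (1 - α) ^ 2 / (1 + α) ^ 2 ≤ 1 :=
      (div_le_one (by positivity)).2 (by nlinarith)
    have hμL' : μ / L ≤ 1 := (div_le_one hL).2 hμL
    rw [mul_div_assoc, sub_nonneg]
    exact mul_le_one₀ hμL' (by positivity) hsq
  · convert sub_le_mul_sub_of_decrease_of_pl (a' := f (x (k + 1)))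
      (c := 1 / (2 * L) * ((1 - α) ^ 2 / (1 + α) ^ 2)) (by positivity) hμ
      (by linarith [hstep k]) (hPL (x k)) using 2
    field_simp

/-- Constant step size h = (1/L)(1−α)/(1+α)² with relative gradient error:
per-step decrease in terms of the true gradient and linear convergence. -/
theorem stmt14 {n : ℕ} (f : EuclideanSpace ℝ (Fin n) → ℝ)
    (hf : Differentiable ℝ f)
    (L μ : ℝ) (hμ : 0 < μ) (hμL : μ ≤ L)
    (hsmooth : ∀ x y, ‖gradient f y - gradient f x‖ ≤ L * ‖y - x‖)
    (fstar : ℝ) (hmin : ∀ y, fstar ≤ f y)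
    (hPL : ∀ y, f y - fstar ≤ (1 / (2 * μ)) * ‖gradient f y‖ ^ 2)
    (α : ℝ) (hα0 : 0 ≤ α) (hα1 : α < 1)
    (x : ℕ → EuclideanSpace ℝ (Fin n))
    (tg : ℕ → EuclideanSpace ℝ (Fin n))
    (herr : ∀ k, ‖tg k - gradient f (x k)‖ ≤ α * ‖gradient f (x k)‖)
    (hiter : ∀ k, x (k + 1) = x k - ((1 / L) * ((1 - α) / (1 + α) ^ 2)) • tg k) :
    (∀ k, f (x (k + 1)) - f (x k)
      ≤ -(1 / (2 * L)) * ((1 - α) ^ 2 / (1 + α) ^ 2) * ‖gradient f (x k)‖ ^ 2) ∧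
    (∀ N : ℕ, f (x N) - fstar
      ≤ (1 - (μ / L) * (1 - α) ^ 2 / (1 + α) ^ 2) ^ N * (f (x 0) - fstar)) :=
  stmt14_general f hf L μ hμ hμL hsmooth fstar hPL α hα0 hα1 x tg herr hiter
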